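/- arXiv:2310.01693 — 3 statements merged into one kernel-verified Lean document; each statement's English description precedes it below -/
import Mathlib

section
/- Let p*, p̂ ∈ ℝ^v be probability distributions with p̂_i ≥ p*_i · exp(−δ) for all i, where δ ≥ 0. Then for any threshold τ ≥ 1 − exp(−δ) and any index i with p̂_i > τ, it holds that p*_i > 0. In other words, threshold-based truncation with threshold τ discards all tokens outside the support of p*. -/
open Finset Real

theorem truncation_discards_outside_support
    (v : ℕ) (hv : 0 < v) (δ : ℝ) (hδ : 0 ≤ δ) (τ : ℝ)
    (pstar phat : Fin v → ℝ)
    (hpstar_nonneg : ∀ j, 0 ≤ pstar j)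
    (hphat_nonneg : ∀ j, 0 ≤ phat j)
    (hpstar_sum : ∑ j, pstar j = 1)
    (hphat_sum : ∑ j, phat j = 1)
    (hunder : ∀ j, pstar j * Real.exp (-δ) ≤ phat j)
    (hτ : 1 - Real.exp (-δ) ≤ τ) :
    ∀ i, τ < phat i → 0 < pstar i := by
  intro i hi
  by_contra h
  push_neg at h
  have hpi : pstar i = 0 := le_antisymm h (hpstar_nonneg i)
  have hsum1 : ∑ j ∈ univ.erase i, pstar j = 1 := by
    have := Finset.sum_erase_add univ pstar (Finset.mem_univ i)
    rw [hpi] at this; linarith [hpstar_sum ▸ this]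
  have hsum2 : ∑ j ∈ univ.erase i, phat j = 1 - phat i := by
    have := Finset.sum_erase_add univ phat (Finset.mem_univ i)
    rw [hphat_sum] at this; linarith
  have hle : Real.exp (-δ) ≤ 1 - phat i := by
    calc Real.exp (-δ) = ∑ j ∈ univ.erase i, pstar j * Real.exp (-δ) := by
          rw [← Finset.sum_mul, hsum1, one_mul]
      _ ≤ ∑ j ∈ univ.erase i, phat j := Finset.sum_le_sum fun j _ => hunder j
      _ = 1 - phat i := hsum2
  linarith
end

section
/- Let W ∈ ℝ^{v×d} and H ∈ ℝ^{d×n}. Define A' ∈ ℝ^{v×n} by A'_{ij} = log(softmax((W H)_{·j})_i), i.e., each column of A' is the log-softmax of the corresponding column of W H. Then rank(A') ≤ d + 1. -/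
open Finset Real

noncomputable def softmax {v : ℕ} (z : Fin v → ℝ) : Fin v → ℝ :=
  fun i => Real.exp (z i) / ∑ j, Real.exp (z j)

theorem log_softmax_rank_le
    (v d n : ℕ) (hv : 0 < v) (hd : 0 < d) (hn : 0 < n)
    (W : Matrix (Fin v) (Fin d) ℝ) (H : Matrix (Fin d) (Fin n) ℝ)
    (A' : Matrix (Fin v) (Fin n) ℝ)
    (hA' : ∀ i j, A' i j = Real.log (softmax (fun k => (W * H) k j) i)) :
    A'.rank ≤ d + 1 := by
  haveI : Nonempty (Fin v) := ⟨⟨0, hv⟩⟩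
  set c : Fin n → ℝ := fun j => - Real.log (∑ i, Real.exp ((W * H) i j)) with hc
  have hA2 : ∀ i j, A' i j = (W * H) i j + c j := by
    intro i j
    have hS : 0 < ∑ k, Real.exp ((W * H) k j) :=
      Finset.sum_pos (fun k _ => Real.exp_pos _) Finset.univ_nonempty
    rw [hA', softmax, Real.log_div (Real.exp_ne_zero _) hS.ne', Real.log_exp]
    ring
  set W' : Matrix (Fin v) (Fin (d + 1)) ℝ :=
    fun i k => if h : (k : ℕ) < d then W i ⟨k, h⟩ else 1 with hW'
  set H' : Matrix (Fin (d + 1)) (Fin n) ℝ :=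
    fun k j => if h : (k : ℕ) < d then H ⟨k, h⟩ j else c j with hH'
  have hfac : A' = W' * H' := by
    ext i j
    rw [hA2 i j]
    simp only [Matrix.mul_apply, Fin.sum_univ_castSucc]
    congr 1
    · apply Finset.sum_congr rfl
      intro k _
      simp [hW', hH', Fin.is_lt k, Fin.castSucc]
    · simp [hW', hH']
  calc A'.rank = (W' * H').rank := by rw [hfac]
    _ ≤ W'.rank := Matrix.rank_mul_le_left _ _
    _ ≤ Fintype.card (Fin (d + 1)) := Matrix.rank_le_card_width _
    _ = d + 1 := Fintype.card_fin _
end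

section
/- Let p̂ be a strictly positive probability distribution on v ≥ 2 tokens, W ∈ ℝ^{v×d}, and δ ≥ 0. Define the BAT-feasible set for index i as the set of p ∈ ℝ^v with p_i = 0, p_j ≥ 0, ∑ p_j = 1, p_j ≤ p̂_j exp(δ), and Wᵀ p = Wᵀ p̂. Then the set of indices accepted by BAT sampling (those with empty feasible set) contains the set of indices accepted by threshold sampling with threshold 1 − exp(−δ) (those with p̂_i > 1 − exp(−δ)). -/
open Finset Real

theorem bat_accepts_threshold_accepted
    (v d : ℕ) (hv : 0 < v) (hd : 0 < d) (δ : ℝ) (hδ : 0 ≤ δ)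
    (W : Matrix (Fin v) (Fin d) ℝ)
    (phat : Fin v → ℝ)
    (hphat_pos : ∀ j, 0 < phat j)
    (hphat_sum : ∑ j, phat j = 1) :
    ∀ i : Fin v, 1 - Real.exp (-δ) < phat i →
      ¬ ∃ p : Fin v → ℝ, (∀ j, 0 ≤ p j) ∧ (∑ j, p j = 1) ∧ p i = 0 ∧
          (∀ j, p j ≤ phat j * Real.exp δ) ∧
          W.transpose.mulVec p = W.transpose.mulVec phat := by
  rintro i hi ⟨p, hp0, hpsum, hpi, hple, -⟩
  have h1 : ∑ j ∈ univ.erase i, p j = 1 := by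
    rw [← hpsum]
    rw [Finset.sum_erase _ hpi]
  have h2 : ∑ j ∈ univ.erase i, p j ≤ ∑ j ∈ univ.erase i, phat j * Real.exp δ :=
    Finset.sum_le_sum fun j _ => hple j
  have h3 : ∑ j ∈ univ.erase i, phat j * Real.exp δ = (1 - phat i) * Real.exp δ := by
    rw [← Finset.sum_mul]
    congr 1
    have := Finset.sum_erase_add univ phat (Finset.mem_univ i)
    linarith [this.symm ▸ hphat_sum]
  have h4 : (1 - phat i) * Real.exp δ < Real.exp (-δ) * Real.exp δ := by
    apply mul_lt_mul_of_pos_right _ (Real.exp_pos δ)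
    linarith
  rw [← Real.exp_add, neg_add_cancel, Real.exp_zero] at h4
  linarith
end
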